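/- Let H₀ and H₁ be complex Hilbert spaces, T₀ ∈ B(H₀), T₁ ∈ B(H₁), A ∈ B(H₁, H₀), and let R be the block operator on H₀ ⊕₂ H₁ defined by R(x, h) = (T₀x + Ah, T₁h). Let μ ∈ ℂ, let k ∈ H₁ satisfy T₁ k = μ k, and let e ∈ H₀ satisfy T₀* e = conj(μ)·e, where T₀* is the Hilbert-space adjoint. Suppose p is a polynomial with complex coefficients such that p(R) = 0 and p′(μ) ≠ 0, where p′ is the derivative of p. Then ⟨e, A k⟩ = 0, where ⟨·,·⟩ denotes the inner product (linear in the second argument). -/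

import Mathlib

/-!
Put `S = R - μ` and `v = (0, k)`. Because `T₀* e = conj μ • e`, the first coordinate of `S w`
pairs with `e` like `A w.snd`, and since `T₁ k = μ k` every `S ^ (n + 1) v` has second
coordinate `0`; so the functional `T ↦ ⟪e, (T v).fst⟫` kills `S ^ (n + 2)`. Expanding `p` in
powers of `X - μ` (Taylor) then gives `0 = ⟪e, (p(R) v).fst⟫ = p'(μ) ⟪e, A k⟫`.
-/

open Polynomial

theorem Polynomial.map_aeval_eq_of_map_sub_pow_eq_zero {K A N : Type*} [CommRing K] [Ring A]
    [Algebra K A] [AddCommGroup N] [Module K N] (f : A →ₗ[K] N) {a : A} {μ : K}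
    (hf : ∀ n, f ((a - algebraMap K A μ) ^ (n + 2)) = 0) (q : K[X]) :
    f (aeval a q) = q.eval μ • f 1 + q.derivative.eval μ • f (a - algebraMap K A μ) := by
  set s := a - algebraMap K A μ
  have h_taylor : aeval a q = aeval s (taylor μ q) := by
    rw [taylor_apply, aeval_comp, map_add, aeval_X, aeval_C, sub_add_cancel]
  rw [h_taylor, aeval_eq_sum_range' (n := q.natDegree + 2) (by rw [natDegree_taylor]; omega),
    map_sum, Finset.sum_range_succ', Finset.sum_range_succ']
  simp only [map_smul, hf, smul_zero, Finset.sum_const_zero, zero_add, pow_one, pow_zero,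
    taylor_coeff_zero, taylor_coeff_one]
  exact add_comm _ _

def IsUpperTriangularBlock {H₀ H₁ : Type*} [NormedAddCommGroup H₀] [NormedSpace ℂ H₀]
    [NormedAddCommGroup H₁] [NormedSpace ℂ H₁]
    (R : WithLp 2 (H₀ × H₁) →L[ℂ] WithLp 2 (H₀ × H₁)) (T₀ : H₀ →L[ℂ] H₀) (A : H₁ →L[ℂ] H₀)
    (T₁ : H₁ →L[ℂ] H₁) : Prop :=
  ∀ x h, R (WithLp.toLp 2 (x, h)) = WithLp.toLp 2 (T₀ x + A h, T₁ h)

namespace IsUpperTriangularBlock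

variable {H₀ H₁ : Type*} [NormedAddCommGroup H₀] [NormedAddCommGroup H₁] [NormedSpace ℂ H₁]

section NormedSpace

variable [NormedSpace ℂ H₀] {R : WithLp 2 (H₀ × H₁) →L[ℂ] WithLp 2 (H₀ × H₁)}
  {T₀ : H₀ →L[ℂ] H₀} {A : H₁ →L[ℂ] H₀} {T₁ : H₁ →L[ℂ] H₁}

theorem sub_algebraMap_apply (hR : IsUpperTriangularBlock R T₀ A T₁) (μ : ℂ)
    (w : WithLp 2 (H₀ × H₁)) :
    (R - algebraMap ℂ _ μ) w =
      WithLp.toLp 2 (T₀ w.fst - μ • w.fst + A w.snd, T₁ w.snd - μ • w.snd) := by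
  have hRw : R w = WithLp.toLp 2 (T₀ w.fst + A w.snd, T₁ w.snd) := hR w.fst w.snd
  refine (WithLp.ext_iff 2).2 (Prod.ext ?_ ?_) <;>
    simp [hRw, Algebra.algebraMap_eq_smul_one, sub_add_eq_add_sub]

theorem snd_sub_algebraMap_pow_succ_apply_eq_zero (hR : IsUpperTriangularBlock R T₀ A T₁)
    {μ : ℂ} {k : H₁} (hk : T₁ k = μ • k) (x : H₀) (n : ℕ) :
    (((R - algebraMap ℂ _ μ) ^ (n + 1)) (WithLp.toLp 2 (x, k))).snd = 0 := by
  induction n with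
  | zero => simp [hR.sub_algebraMap_apply, hk]
  | succ n ih =>
    rw [pow_succ', mul_apply_eq_comp, hR.sub_algebraMap_apply, WithLp.toLp_snd, ih]
    simp

end NormedSpace

theorem inner_fst_sub_algebraMap_apply [InnerProductSpace ℂ H₀] [CompleteSpace H₀]
    {R : WithLp 2 (H₀ × H₁) →L[ℂ] WithLp 2 (H₀ × H₁)} {T₀ : H₀ →L[ℂ] H₀} {A : H₁ →L[ℂ] H₀}
    {T₁ : H₁ →L[ℂ] H₁} (hR : IsUpperTriangularBlock R T₀ A T₁) {μ : ℂ} {e : H₀}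
    (he : ContinuousLinearMap.adjoint T₀ e = (starRingEnd ℂ) μ • e)
    (w : WithLp 2 (H₀ × H₁)) :
    inner ℂ e ((R - algebraMap ℂ _ μ) w).fst = inner ℂ e (A w.snd) := by
  rw [hR.sub_algebraMap_apply, WithLp.toLp_fst, inner_add_right, inner_sub_right,
    ← ContinuousLinearMap.adjoint_inner_left, he, inner_smul_left, inner_smul_right]
  simp

end IsUpperTriangularBlock

theorem inner_eq_zero_of_aeval_block_eq_zero
    {H₀ H₁ : Type}
    [NormedAddCommGroup H₀] [InnerProductSpace ℂ H₀] [CompleteSpace H₀]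
    [NormedAddCommGroup H₁] [InnerProductSpace ℂ H₁]
    (T₀ : H₀ →L[ℂ] H₀) (T₁ : H₁ →L[ℂ] H₁) (A : H₁ →L[ℂ] H₀)
    (R : WithLp 2 (H₀ × H₁) →L[ℂ] WithLp 2 (H₀ × H₁))
    (hR : ∀ (x : H₀) (h : H₁),
      R ((WithLp.equiv 2 (H₀ × H₁)).symm (x, h))
        = (WithLp.equiv 2 (H₀ × H₁)).symm (T₀ x + A h, T₁ h))
    (μ : ℂ) (k : H₁) (hk : T₁ k = μ • k)
    (e : H₀) (he : ContinuousLinearMap.adjoint T₀ e = (starRingEnd ℂ) μ • e)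
    (p : Polynomial ℂ) (hpR : Polynomial.aeval R p = 0)
    (hp' : (Polynomial.derivative p).eval μ ≠ 0) :
    (inner ℂ e (A k) : ℂ) = 0 := by
  have hR : IsUpperTriangularBlock R T₀ A T₁ := hR
  let f := innerₛₗ ℂ e ∘ₗ WithLp.fstₗ 2 ℂ H₀ H₁ ∘ₗ
    (ContinuousLinearMap.apply ℂ _ (WithLp.toLp 2 ((0 : H₀), k))).toLinearMap
  have hf (T) : f T = inner ℂ e (T (WithLp.toLp 2 ((0 : H₀), k))).fst := rfl
  have hf_pow (n : ℕ) : f ((R - algebraMap ℂ _ μ) ^ (n + 2)) = 0 := by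
    rw [hf, pow_succ', mul_apply_eq_comp, hR.inner_fst_sub_algebraMap_apply he,
      hR.snd_sub_algebraMap_pow_succ_apply_eq_zero hk, map_zero, inner_zero_right]
  have h_taylor := map_aeval_eq_of_map_sub_pow_eq_zero f hf_pow p
  rw [hpR, map_zero, hf, hf, hR.inner_fst_sub_algebraMap_apply he] at h_taylor
  simpa [hp'] using h_taylor.symm
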